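/- Let K be a field, let f be a power series in K[[x_1,...,x_n]], let u be a unit of K[[x_1,...,x_n]] and let phi be a local K-algebra automorphism of K[[x_1,...,x_n]]. Then T(u * phi(f)) = phi(T(f)), i.e. the Tjurina ideal of u * phi(f) equals the image under phi of the Tjurina ideal of f. In particular, the Tjurina number tau(f) = dim_K K[[x_1,...,x_n]]/T(f) is invariant under contact equivalence. -/

import Mathlib

/-!  Setup: formal power series ring `K[[x_1,…,x_n]]`, its maximal ideal,
formal partial derivatives, Jacobian and Tjurina ideals, the order of a
power series, and right/contact equivalence. -/

/-- The formal partial derivative of a multivariate power series with respect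
to the `i`-th variable. -/
noncomputable def pderiv {n : ℕ} {K : Type} [Field K] (i : Fin n)
    (f : MvPowerSeries (Fin n) K) : MvPowerSeries (Fin n) K :=
  fun d => ((d i : K) + 1) * MvPowerSeries.coeff (d + Finsupp.single i 1) f

/-- The Jacobian ideal `J(f) = ⟨f_{x_1},…,f_{x_n}⟩`. -/
noncomputable def jacobianIdeal {n : ℕ} {K : Type} [Field K]
    (f : MvPowerSeries (Fin n) K) : Ideal (MvPowerSeries (Fin n) K) :=
  Ideal.span (Set.range fun i => pderiv i f)

/-- The Tjurina ideal `T(f) = ⟨f⟩ + J(f)`. -/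
noncomputable def tjurinaIdeal {n : ℕ} {K : Type} [Field K]
    (f : MvPowerSeries (Fin n) K) : Ideal (MvPowerSeries (Fin n) K) :=
  Ideal.span {f} ⊔ jacobianIdeal f

/-- The maximal ideal `m = ⟨x_1,…,x_n⟩` of `K[[x_1,…,x_n]]`. -/
noncomputable def maxIdeal (n : ℕ) (K : Type) [Field K] :
    Ideal (MvPowerSeries (Fin n) K) :=
  Ideal.span (Set.range (MvPowerSeries.X : Fin n → MvPowerSeries (Fin n) K))

/-- The order of a power series: the largest `k` with `f ∈ m^k`
(for `f ≠ 0` this supremum is attained). -/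
noncomputable def ord {n : ℕ} {K : Type} [Field K]
    (f : MvPowerSeries (Fin n) K) : ℕ :=
  sSup {k : ℕ | f ∈ maxIdeal n K ^ k}

/-- Right equivalence: `f = φ(g)` for a `K`-algebra automorphism `φ`. -/
def RightEquiv {n : ℕ} {K : Type} [Field K]
    (f g : MvPowerSeries (Fin n) K) : Prop :=
  ∃ φ : MvPowerSeries (Fin n) K ≃ₐ[K] MvPowerSeries (Fin n) K, f = φ g

/-- Contact equivalence: `f = u * φ(g)` for a unit `u` and a `K`-algebra
automorphism `φ`. -/
def ContactEquiv {n : ℕ} {K : Type} [Field K]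
    (f g : MvPowerSeries (Fin n) K) : Prop :=
  ∃ (u : (MvPowerSeries (Fin n) K)ˣ)
    (φ : MvPowerSeries (Fin n) K ≃ₐ[K] MvPowerSeries (Fin n) K),
    f = (u : MvPowerSeries (Fin n) K) * φ g

/-! The Tjurina ideal is characterised by `T(f) ≤ I ↔ f ∈ I ∧ ∀ i, ∂ᵢ f ∈ I`. By Leibniz,
`∂ᵢ(a f) = a ∂ᵢ f + f ∂ᵢ a ∈ T(f)`, so `T(a f) ≤ T(f)`, with equality when `a` is a unit. For an
automorphism `φ` the chain rule `∂ᵢ(φ f) = ∑ⱼ φ(∂ⱼ f) ∂ᵢ(φ xⱼ)` gives `T(φ f) ≤ φ(T(f))`, and the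
same inclusion for `φ⁻¹` gives equality. The chain rule holds for polynomials by induction and
extends to power series by `m`-adic continuity: `m^k` consists of the series of order `≥ k`,
`φ` maps `m` into itself because it maps non-units to non-units, and every derivation maps
`m^(k+1)` into `m^k`. -/

namespace Derivation

variable {R A : Type*} [CommSemiring R] [CommSemiring A] [Algebra R A]

theorem map_aeval_eq_sum {σ M : Type*} [Fintype σ] [AddCommMonoid M] [Module A M] [Module R M]
    [IsScalarTower R A M] (D : Derivation R A M) (a : σ → A) (p : MvPolynomial σ R) :
    D (MvPolynomial.aeval a p) = ∑ j, MvPolynomial.aeval a (MvPolynomial.pderiv j p) • D (a j) := by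
  classical
  induction p using MvPolynomial.induction_on with
  | C r => simp
  | add p q hp hq => simp [hp, hq, add_smul, Finset.sum_add_distrib]
  | mul_X p i hp =>
    simp [hp, Derivation.leibniz, add_smul, mul_smul, Finset.sum_add_distrib, Finset.smul_sum,
      MvPolynomial.pderiv_X, Pi.single_apply, apply_ite (MvPolynomial.aeval a), ite_smul]

theorem apply_mem_pow_of_mem_pow_succ (D : Derivation R A A) {I : Ideal A} {k : ℕ} {a : A}
    (ha : a ∈ I ^ (k + 1)) : D a ∈ I ^ k := by
  induction k generalizing a with
  | zero => simp
  | succ k ih =>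
    rw [pow_succ] at ha
    refine Submodule.mul_induction_on ha (fun x hx y hy => ?_) (fun x y hx hy => ?_)
    · rw [leibniz, smul_eq_mul, smul_eq_mul]
      refine add_mem (Ideal.mul_mem_right _ _ hx) ?_
      rw [pow_succ']
      exact Ideal.mul_mem_mul hy (ih hx)
    · rw [map_add]
      exact add_mem hx hy

end Derivation

namespace MvPowerSeries

section CommRing

variable {σ R : Type*} [CommRing R]

theorem mem_span_range_X_pow_iff [Finite σ] {k : ℕ} {f : MvPowerSeries σ R} :
    f ∈ Ideal.span (Set.range X) ^ k ↔ ∀ d : σ →₀ ℕ, d.degree < k → coeff d f = 0 := by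
  -- Transport along `R⟦σ⟧ ≃ₐ` the adic completion of `R[σ]` at its ideal of variables, where
  -- `J ^ k • ⊤` is the kernel of the projection to `R[σ] ⧸ J ^ k`.
  set J := MvPolynomial.idealOfVars σ R
  set e := (toAdicCompletionAlgEquiv σ R).toLinearEquiv
  have hspan : Ideal.span (Set.range X) ^ k =
      (J ^ k).map (algebraMap (MvPolynomial σ R) (MvPowerSeries σ R)) := by
    rw [Ideal.map_pow, Ideal.map_span, ← Set.range_comp]
    congr 3
    ext1 j
    simp [algebraMap_apply']
  have he : f ∈ (J ^ k • ⊤ : Submodule (MvPolynomial σ R) (MvPowerSeries σ R)) ↔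
      e f ∈ (J ^ k • ⊤ : Submodule (MvPolynomial σ R) (AdicCompletion J (MvPolynomial σ R))) := by
    rw [← LinearEquiv.range e, ← Submodule.map_top, ← Submodule.map_smul'',
      Submodule.mem_map_equiv, LinearEquiv.symm_apply_apply]
  rw [hspan, ← Submodule.restrictScalars_mem (MvPolynomial σ R), ← Ideal.smul_top_eq_map, he,
    AdicCompletion.pow_smul_top_eq_ker_eval (MvPolynomial.idealOfVars_fg σ R), LinearMap.mem_ker,
    AdicCompletion.eval_apply]
  change (toAdicCompletion σ R f).val k = 0 ↔ _
  rw [toAdicCompletion_apply_eq_mk_truncTotal, Ideal.Quotient.eq_zero_iff_mem, smul_eq_mul,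
    Ideal.mul_top, MvPolynomial.mem_pow_idealOfVars_iff']
  exact forall_congr' fun d => imp_congr_right fun hd => by rw [coeff_truncTotal _ hd]

section Finite

variable [Finite σ]

theorem sub_truncTotal_mem_span_range_X_pow (k : ℕ) (f : MvPowerSeries σ R) :
    f - truncTotal k f ∈ Ideal.span (Set.range X) ^ k :=
  mem_span_range_X_pow_iff.mpr fun d hd => by
    rw [map_sub, MvPolynomial.coeff_coe, coeff_truncTotal _ hd, sub_self]

theorem eq_zero_of_forall_mem_span_range_X_pow {f : MvPowerSeries σ R}
    (hf : ∀ k, f ∈ Ideal.span (Set.range X) ^ k) : f = 0 := by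
  ext d
  exact mem_span_range_X_pow_iff.mp (hf (d.degree + 1)) d (Nat.lt_succ_self _)

theorem algHom_apply_mem_span_range_X_pow (ψ : MvPowerSeries σ R →ₐ[R] MvPowerSeries σ R)
    (hψ : ∀ j, constantCoeff (ψ (X j)) = 0) {k : ℕ} {f : MvPowerSeries σ R}
    (hf : f ∈ Ideal.span (Set.range X) ^ k) : ψ f ∈ Ideal.span (Set.range X) ^ k := by
  have hmap : (Ideal.span (Set.range X)).map ψ ≤ Ideal.span (Set.range (X : σ → _)) := by
    rw [Ideal.map_span, Ideal.span_le, ← Set.range_comp, Set.range_subset_iff]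
    intro j
    rw [← pow_one (Ideal.span _), SetLike.mem_coe, mem_span_range_X_pow_iff]
    intro d hd
    rw [Nat.lt_one_iff, Finsupp.degree_eq_zero_iff] at hd
    rw [hd, coeff_zero_eq_constantCoeff_apply]
    exact hψ j
  have := Ideal.mem_map_of_mem ψ hf
  rw [Ideal.map_pow] at this
  exact Ideal.pow_right_mono hmap k this

theorem addMonoidHom_eq_zero_of_apply_coe_eq_zero (E : MvPowerSeries σ R →+ MvPowerSeries σ R)
    (hpoly : ∀ p : MvPolynomial σ R, E p = 0)
    (hE : ∀ k (f : MvPowerSeries σ R),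
      f ∈ Ideal.span (Set.range X) ^ (k + 1) → E f ∈ Ideal.span (Set.range X) ^ k) :
    E = 0 := by
  refine AddMonoidHom.ext fun f => eq_zero_of_forall_mem_span_range_X_pow (σ := σ) fun k => ?_
  have := hE k _ (sub_truncTotal_mem_span_range_X_pow (k + 1) f)
  rwa [map_sub, hpoly, sub_zero] at this

end Finite

theorem derivation_algHom_apply_eq_sum [Fintype σ]
    (D : Derivation R (MvPowerSeries σ R) (MvPowerSeries σ R))
    (ψ : MvPowerSeries σ R →ₐ[R] MvPowerSeries σ R) (hψ : ∀ j, constantCoeff (ψ (X j)) = 0)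
    (f : MvPowerSeries σ R) : D (ψ f) = ∑ j, ψ (pderiv R j f) * D (ψ (X j)) := by
  have hcoe : ∀ p : MvPolynomial σ R, ψ p = MvPolynomial.aeval (fun j => ψ (X j)) p := by
    intro p
    change (ψ.comp (MvPolynomial.coeToMvPowerSeries.algHom R)) p = _
    congr 1
    ext j
    simp
  let E : MvPowerSeries σ R →+ MvPowerSeries σ R :=
    AddMonoidHom.mk' (fun f => D (ψ f) - ∑ j, ψ (pderiv R j f) * D (ψ (X j))) fun f g => by
      simp only [map_add, add_mul, Finset.sum_add_distrib]
      abel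
  have hE : E = 0 := by
    refine addMonoidHom_eq_zero_of_apply_coe_eq_zero E (fun p => ?_) fun k f hf => ?_
    · simp [E, hcoe, D.map_aeval_eq_sum, pderiv_coe]
    · refine sub_mem (D.apply_mem_pow_of_mem_pow_succ (algHom_apply_mem_span_range_X_pow ψ hψ hf))
        (Ideal.sum_mem _ fun j _ => Ideal.mul_mem_right _ _ ?_)
      exact algHom_apply_mem_span_range_X_pow ψ hψ
        ((pderiv R j).apply_mem_pow_of_mem_pow_succ hf)
  exact sub_eq_zero.mp (DFunLike.congr_fun hE f)

end CommRing

theorem constantCoeff_equiv_apply_eq_zero {σ τ K F : Type*} [Field K]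
    [EquivLike F (MvPowerSeries σ K) (MvPowerSeries τ K)]
    [MulEquivClass F (MvPowerSeries σ K) (MvPowerSeries τ K)] (φ : F) {f : MvPowerSeries σ K}
    (hf : constantCoeff f = 0) : constantCoeff (φ f) = 0 := by
  by_contra h
  have hunit : IsUnit f :=
    (isUnit_map_iff φ f).mp (isUnit_iff_constantCoeff.mpr (isUnit_iff_ne_zero.mpr h))
  rw [isUnit_iff_constantCoeff, hf] at hunit
  exact not_isUnit_zero hunit

end MvPowerSeries

universe u

theorem rank_quotient_map_algEquiv {R : Type*} {A B : Type u} [CommRing R] [CommRing A]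
    [CommRing B] [Algebra R A] [Algebra R B] (e : A ≃ₐ[R] B) (I : Ideal A) :
    Module.rank R (B ⧸ I.map e) = Module.rank R (A ⧸ I) :=
  (Ideal.quotientEquivAlg I (I.map e) e rfl).toLinearEquiv.rank_eq.symm

section Tjurina

variable {n : ℕ} {K : Type} [Field K]

theorem pderiv_eq_mvPowerSeries_pderiv (i : Fin n) (f : MvPowerSeries (Fin n) K) :
    pderiv i f = MvPowerSeries.pderiv K i f := by
  ext d
  rw [MvPowerSeries.coeff_pderiv]
  exact mul_comm _ _

theorem tjurinaIdeal_le_iff {f : MvPowerSeries (Fin n) K} {I : Ideal (MvPowerSeries (Fin n) K)} :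
    tjurinaIdeal f ≤ I ↔ f ∈ I ∧ ∀ i, MvPowerSeries.pderiv K i f ∈ I := by
  simp [tjurinaIdeal, jacobianIdeal, Ideal.span_le, Set.range_subset_iff,
    pderiv_eq_mvPowerSeries_pderiv]

theorem self_mem_tjurinaIdeal (f : MvPowerSeries (Fin n) K) : f ∈ tjurinaIdeal f :=
  (tjurinaIdeal_le_iff.mp le_rfl).1

theorem pderiv_mem_tjurinaIdeal (i : Fin n) (f : MvPowerSeries (Fin n) K) :
    MvPowerSeries.pderiv K i f ∈ tjurinaIdeal f :=
  (tjurinaIdeal_le_iff.mp le_rfl).2 i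

theorem tjurinaIdeal_mul_le (a f : MvPowerSeries (Fin n) K) :
    tjurinaIdeal (a * f) ≤ tjurinaIdeal f := by
  refine tjurinaIdeal_le_iff.mpr ⟨Ideal.mul_mem_left _ _ (self_mem_tjurinaIdeal f), fun i => ?_⟩
  rw [Derivation.leibniz, smul_eq_mul, smul_eq_mul]
  exact add_mem (Ideal.mul_mem_left _ _ (pderiv_mem_tjurinaIdeal i f))
    (Ideal.mul_mem_right _ _ (self_mem_tjurinaIdeal f))

theorem tjurinaIdeal_units_mul (u : (MvPowerSeries (Fin n) K)ˣ) (f : MvPowerSeries (Fin n) K) :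
    tjurinaIdeal ((u : MvPowerSeries (Fin n) K) * f) = tjurinaIdeal f := by
  refine le_antisymm (tjurinaIdeal_mul_le _ _) ?_
  simpa using tjurinaIdeal_mul_le (↑u⁻¹ : MvPowerSeries (Fin n) K) (u * f)

theorem tjurinaIdeal_algHom_apply_le {F : Type*}
    [FunLike F (MvPowerSeries (Fin n) K) (MvPowerSeries (Fin n) K)]
    [AlgHomClass F K (MvPowerSeries (Fin n) K) (MvPowerSeries (Fin n) K)] (ψ : F)
    (hψ : ∀ j, MvPowerSeries.constantCoeff (ψ (MvPowerSeries.X j)) = 0)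
    (f : MvPowerSeries (Fin n) K) : tjurinaIdeal (ψ f) ≤ (tjurinaIdeal f).map ψ := by
  refine tjurinaIdeal_le_iff.mpr ⟨Ideal.mem_map_of_mem _ (self_mem_tjurinaIdeal f), fun i => ?_⟩
  rw [← AlgHom.coe_coe ψ, MvPowerSeries.derivation_algHom_apply_eq_sum _ _ hψ]
  exact Ideal.sum_mem _ fun j _ =>
    Ideal.mul_mem_right _ _ (Ideal.mem_map_of_mem _ (pderiv_mem_tjurinaIdeal j f))

theorem tjurinaIdeal_algEquiv_apply (φ : MvPowerSeries (Fin n) K ≃ₐ[K] MvPowerSeries (Fin n) K)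
    (f : MvPowerSeries (Fin n) K) : tjurinaIdeal (φ f) = (tjurinaIdeal f).map φ := by
  have hlocal (ψ : MvPowerSeries (Fin n) K ≃ₐ[K] MvPowerSeries (Fin n) K) (j : Fin n) :
      MvPowerSeries.constantCoeff (ψ (MvPowerSeries.X j)) = 0 :=
    MvPowerSeries.constantCoeff_equiv_apply_eq_zero ψ (MvPowerSeries.constantCoeff_X j)
  refine le_antisymm (tjurinaIdeal_algHom_apply_le φ (hlocal φ) f) ?_
  have h := tjurinaIdeal_algHom_apply_le φ.symm (hlocal φ.symm) (φ f)
  rw [φ.symm_apply_apply] at h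
  rw [Ideal.map_le_iff_le_comap]
  intro x hx
  obtain ⟨y, hy, rfl⟩ := (Ideal.mem_map_of_equiv φ.symm x).mp (h hx)
  simpa using hy

end Tjurina

/-- `T(u·φ(f)) = φ(T(f))` for a unit `u` and a `K`-algebra
automorphism `φ`; in particular the Tjurina number is invariant under
contact equivalence. -/
theorem tjurinaIdeal_map_algEquiv
    {n : ℕ} {K : Type} [Field K] (f : MvPowerSeries (Fin n) K)
    (u : (MvPowerSeries (Fin n) K)ˣ)
    (φ : MvPowerSeries (Fin n) K ≃ₐ[K] MvPowerSeries (Fin n) K) :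
    tjurinaIdeal ((u : MvPowerSeries (Fin n) K) * φ f) =
        Ideal.map φ (tjurinaIdeal f) ∧
      ∀ g : MvPowerSeries (Fin n) K, ContactEquiv f g →
        Module.rank K (MvPowerSeries (Fin n) K ⧸ tjurinaIdeal f) =
          Module.rank K (MvPowerSeries (Fin n) K ⧸ tjurinaIdeal g) := by
  refine ⟨by rw [tjurinaIdeal_units_mul, tjurinaIdeal_algEquiv_apply], ?_⟩
  rintro g ⟨v, ψ, rfl⟩
  rw [tjurinaIdeal_units_mul, tjurinaIdeal_algEquiv_apply, rank_quotient_map_algEquiv]
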